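/- arXiv:1606.01028 — 6 statements merged into one kernel-verified Lean document; each statement's English description precedes it below -/
import Mathlib

section
/- Every extreme point of the Individual Pieces Set IPS is the value vector a(X̂) of some integer allocation X̂. -/
/-- An allocation matrix: nonnegative entries, columns summing to 1. -/
def IsAlloc {m : ℕ} (X : Fin 3 → Fin m → ℝ) : Prop :=
  (∀ i j, 0 ≤ X i j) ∧ ∀ j, ∑ i, X i j = 1

/-- An integer allocation: entries in {0,1}, columns summing to 1. -/
def IsIntAlloc {m : ℕ} (X : Fin 3 → Fin m → ℝ) : Prop :=
  (∀ i j, X i j = 0 ∨ X i j = 1) ∧ ∀ j, ∑ i, X i j = 1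

/-- Value vector of an allocation. -/
def payoff {m : ℕ} (a X : Fin 3 → Fin m → ℝ) : Fin 3 → ℝ :=
  fun i => ∑ j, a i j * X i j

/-- Individual Pieces Set. -/
def IPS {m : ℕ} (a : Fin 3 → Fin m → ℝ) : Set (Fin 3 → ℝ) :=
  {v | ∃ X, IsAlloc X ∧ payoff a X = v}

/-!
If an allocation `X` realises an extreme point `v` of `IPS a` and some good `j` is shared by two
players, then moving a small amount of `j` from one of them to the other, or back, gives two
allocations whose values average to `v`. Extremality forces the values to stay `v`, so both players
value `j` at `0`. Hence giving every good entirely to one of the players holding a positive share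
of it is an integer allocation with value `v`.
-/

theorem eq_zero_of_mem_extremePoints_of_add_mem_of_sub_mem {𝕜 E : Type*} [Ring 𝕜] [LinearOrder 𝕜]
    [IsStrictOrderedRing 𝕜] [Invertible (2 : 𝕜)] [AddCommGroup E] [Module 𝕜 E] {A : Set E}
    {v w : E} (hv : v ∈ A.extremePoints 𝕜) (hadd : v + w ∈ A) (hsub : v - w ∈ A) : w = 0 :=
  add_eq_left.mp (hv.2 hadd hsub (mem_openSegment_add_sub v w))

section Allocation

variable {m : ℕ}

lemma payoff_add (a X Y : Fin 3 → Fin m → ℝ) : payoff a (X + Y) = payoff a X + payoff a Y := by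
  ext i
  simp [payoff, mul_add, Finset.sum_add_distrib]

lemma payoff_sub (a X Y : Fin 3 → Fin m → ℝ) : payoff a (X - Y) = payoff a X - payoff a Y := by
  ext i
  simp [payoff, mul_sub, Finset.sum_sub_distrib]

/-- Moves the amount `ε` of good `j` from player `i₂` to player `i₁`. -/
def transfer (i₁ i₂ : Fin 3) (j : Fin m) (ε : ℝ) : Fin 3 → Fin m → ℝ :=
  Pi.single i₁ (Pi.single j ε) - Pi.single i₂ (Pi.single j ε)

lemma transfer_neg (i₁ i₂ : Fin 3) (j : Fin m) (ε : ℝ) :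
    transfer i₁ i₂ j (-ε) = -transfer i₁ i₂ j ε := by
  simp only [transfer, Pi.single_neg, neg_sub_neg, neg_sub]

lemma sum_transfer_apply (i₁ i₂ : Fin 3) (j j' : Fin m) (ε : ℝ) :
    ∑ i, transfer i₁ i₂ j ε i j' = 0 := by
  simp [transfer, Finset.sum_sub_distrib, ← Finset.sum_apply]

lemma payoff_transfer_apply_left (a : Fin 3 → Fin m → ℝ) {i₁ i₂ : Fin 3} (h : i₁ ≠ i₂)
    (j : Fin m) (ε : ℝ) : payoff a (transfer i₁ i₂ j ε) i₁ = a i₁ j * ε := by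
  simp [payoff, transfer, h, Pi.single_apply]

lemma IsAlloc.add_transfer {X : Fin 3 → Fin m → ℝ} (hX : IsAlloc X) {i₁ i₂ : Fin 3} {j : Fin m}
    {ε : ℝ} (h₁ : -ε ≤ X i₁ j) (h₂ : ε ≤ X i₂ j) : IsAlloc (X + transfer i₁ i₂ j ε) := by
  refine ⟨fun i j' => ?_, fun j' => ?_⟩
  · have := hX.1 i j'
    rcases eq_or_ne i i₁ with rfl | hi₁ <;> rcases eq_or_ne i i₂ with rfl | hi₂ <;>
      rcases eq_or_ne j' j with rfl | hj <;> simp [transfer, *]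
    all_goals linarith
  · simp [Finset.sum_add_distrib, hX.2 j', sum_transfer_apply]

lemma IsAlloc.exists_pos {X : Fin 3 → Fin m → ℝ} (hX : IsAlloc X) (j : Fin m) :
    ∃ i, 0 < X i j := by
  simpa using Finset.exists_lt_of_sum_lt (s := .univ) (f := 0) (g := (X · j)) (by simp [hX.2 j])

variable {a X : Fin 3 → Fin m → ℝ}

theorem valuation_eq_zero_of_shared (hX : IsAlloc X) (hv : payoff a X ∈ (IPS a).extremePoints ℝ)
    {i₁ i₂ : Fin 3} {j : Fin m} (hne : i₁ ≠ i₂) (h₁ : 0 < X i₁ j) (h₂ : 0 < X i₂ j) :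
    a i₁ j = 0 := by
  set ε := min (X i₁ j) (X i₂ j)
  have hε : 0 < ε := lt_min h₁ h₂
  have hε₁ : ε ≤ X i₁ j := min_le_left _ _
  have hε₂ : ε ≤ X i₂ j := min_le_right _ _
  have hplus : IsAlloc (X + transfer i₁ i₂ j ε) := hX.add_transfer (by linarith) hε₂
  have hminus : IsAlloc (X - transfer i₁ i₂ j ε) := by
    rw [sub_eq_add_neg, ← transfer_neg]
    exact hX.add_transfer (by linarith) (by linarith)
  have hzero : payoff a (transfer i₁ i₂ j ε) = 0 :=
    eq_zero_of_mem_extremePoints_of_add_mem_of_sub_mem hv ⟨_, hplus, payoff_add ..⟩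
      ⟨_, hminus, payoff_sub ..⟩
  have h := congrFun hzero i₁
  rw [payoff_transfer_apply_left a hne, Pi.zero_apply] at h
  exact (mul_eq_zero.mp h).resolve_right hε.ne'

theorem eq_one_of_valuation_ne_zero (hX : IsAlloc X) (hv : payoff a X ∈ (IPS a).extremePoints ℝ)
    {i : Fin 3} {j : Fin m} (ha : a i j ≠ 0) (hpos : 0 < X i j) : X i j = 1 := by
  rw [← hX.2 j, Finset.sum_eq_single i _ (by simp)]
  intro i' _ hi'
  by_contra hne
  exact ha (valuation_eq_zero_of_shared hX hv hi'.symm hpos ((hX.1 i' j).lt_of_ne' hne))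

def assignment (σ : Fin m → Fin 3) : Fin 3 → Fin m → ℝ :=
  fun i j => if i = σ j then 1 else 0

lemma isIntAlloc_assignment (σ : Fin m → Fin 3) : IsIntAlloc (assignment σ) :=
  ⟨fun i j => by by_cases h : i = σ j <;> simp [assignment, h], fun j => by simp [assignment]⟩

theorem payoff_assignment (hX : IsAlloc X) (hv : payoff a X ∈ (IPS a).extremePoints ℝ)
    {σ : Fin m → Fin 3} (hσ : ∀ j, 0 < X (σ j) j) : payoff a (assignment σ) = payoff a X := by
  ext i
  refine Finset.sum_congr rfl fun j _ => ?_
  by_cases ha : a i j = 0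
  · simp [ha]
  by_cases hi : i = σ j
  · subst hi
    simp [assignment, eq_one_of_valuation_ne_zero hX hv ha (hσ j)]
  · have hXij : X i j = 0 := by
      by_contra hne
      exact ha (valuation_eq_zero_of_shared hX hv hi ((hX.1 i j).lt_of_ne' hne) (hσ j))
    simp [assignment, hi, hXij]

end Allocation

theorem extremePoint_is_integer_allocation_general (m : ℕ) (a : Fin 3 → Fin m → ℝ) :
    ∀ v ∈ Set.extremePoints ℝ (IPS a), ∃ X, IsIntAlloc X ∧ payoff a X = v := by
  intro v hv
  obtain ⟨X, hX, rfl⟩ := hv.1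
  choose σ hσ using hX.exists_pos
  exact ⟨assignment σ, isIntAlloc_assignment σ, payoff_assignment hX hv hσ⟩

theorem extremePoint_is_integer_allocation (m : ℕ) (a : Fin 3 → Fin m → ℝ)
    (ha : ∀ i j, 0 ≤ a i j) (hrow : ∀ i, ∑ j, a i j = 1) :
    ∀ v ∈ Set.extremePoints ℝ (IPS a), ∃ X, IsIntAlloc X ∧ payoff a X = v :=
  extremePoint_is_integer_allocation_general m a
end

section
/- Under mutual absolute continuity, a maxmin allocation is Pareto optimal: there is no allocation X' with a_i(X') ≥ a_i(X*) for all i with a strict inequality for some i. -/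
def shiftGood {m : ℕ} (X : Fin 3 → Fin m → ℝ) (j : Fin m) (d : Fin 3 → ℝ) :
    Fin 3 → Fin m → ℝ :=
  fun k l => X k l + if l = j then d k else 0

section

variable {m : ℕ} {a X : Fin 3 → Fin m → ℝ}

lemma payoff_nonneg (ha : ∀ i j, 0 ≤ a i j) (hX : IsAlloc X) (i : Fin 3) :
    0 ≤ payoff a X i :=
  Finset.sum_nonneg fun j _ => mul_nonneg (ha i j) (hX.1 i j)

lemma exists_pos_of_payoff_pos (ha : ∀ i j, 0 ≤ a i j) {i : Fin 3} (h : 0 < payoff a X i) :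
    ∃ j, 0 < X i j := by
  obtain ⟨j, -, hj⟩ := Finset.exists_lt_of_sum_lt (f := fun _ => (0 : ℝ))
    (by simpa [payoff] using h)
  exact ⟨j, pos_of_mul_pos_right hj (ha i j)⟩

lemma payoff_shiftGood (j : Fin m) (d : Fin 3 → ℝ) (k : Fin 3) :
    payoff a (shiftGood X j d) k = payoff a X k + a k j * d k := by
  simp only [payoff, shiftGood, mul_add, Finset.sum_add_distrib, mul_ite, mul_zero,
    Finset.sum_ite_eq', Finset.mem_univ, if_true]

lemma isAlloc_shiftGood (hX : IsAlloc X) {j : Fin m} {d : Fin 3 → ℝ} (hd : ∑ k, d k = 0)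
    (hnonneg : ∀ k, 0 ≤ X k j + d k) : IsAlloc (shiftGood X j d) := by
  refine ⟨fun k l => ?_, fun l => ?_⟩
  · by_cases hl : l = j
    · subst hl; simpa [shiftGood] using hnonneg k
    · simpa [shiftGood, hl] using hX.1 k l
  · by_cases hl : l = j <;> simp [shiftGood, Finset.sum_add_distrib, hX.2, hl, hd]

lemma sum_ite_neg_half (i₀ : Fin 3) (ε : ℝ) :
    ∑ k, (if k = i₀ then -ε else ε / 2) = 0 := by
  fin_cases i₀ <;> simp [Fin.sum_univ_three] <;> ring

theorem exists_isAlloc_payoff_gt (ha : ∀ i j, 0 < a i j) (hX : IsAlloc X) {p : Fin 3 → ℝ}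
    (hle : ∀ i, p i ≤ payoff a X i) {i₀ : Fin 3} (hlt : p i₀ < payoff a X i₀) {j : Fin m}
    (hj : 0 < X i₀ j) : ∃ Y, IsAlloc Y ∧ ∀ i, p i < payoff a Y i := by
  obtain ⟨c, hc, hac⟩ := exists_pos_mul_lt (sub_pos.2 hlt) (a i₀ j)
  set ε := min (X i₀ j) c
  have hε : 0 < ε := lt_min hj hc
  have hloss : a i₀ j * ε < payoff a X i₀ - p i₀ :=
    (mul_le_mul_of_nonneg_left (min_le_right _ _) (ha i₀ j).le).trans_lt hac
  refine ⟨shiftGood X j fun k => if k = i₀ then -ε else ε / 2,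
    isAlloc_shiftGood hX (sum_ite_neg_half i₀ ε) fun k => ?_, fun k => ?_⟩
  · split_ifs
    · subst k; linarith [min_le_left (X i₀ j) c]
    · linarith [hX.1 k j]
  · rw [payoff_shiftGood]
    split_ifs with hk
    · subst k; linarith
    · linarith [hle k, mul_pos (ha k j) (half_pos hε)]

end

lemma min3_lt_min3 {p q : Fin 3 → ℝ} (h : ∀ i, p i < q i) :
    min (min (p 0) (p 1)) (p 2) < min (min (q 0) (q 1)) (q 2) := by
  have := h 0; have := h 1; have := h 2
  simp only [lt_min_iff, min_lt_iff]
  grind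

theorem maxmin_is_pareto_optimal_general (m : ℕ) (a : Fin 3 → Fin m → ℝ)
    (ha : ∀ i j, 0 < a i j)
    (Xs : Fin 3 → Fin m → ℝ) (hXs : IsAlloc Xs)
    (hmax : ∀ X : Fin 3 → Fin m → ℝ, IsAlloc X →
      min (min (payoff a X 0) (payoff a X 1)) (payoff a X 2) ≤
        min (min (payoff a Xs 0) (payoff a Xs 1)) (payoff a Xs 2)) :
    ¬ ∃ X' : Fin 3 → Fin m → ℝ, IsAlloc X' ∧
      (∀ i, payoff a Xs i ≤ payoff a X' i) ∧ ∃ i, payoff a Xs i < payoff a X' i := by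
  rintro ⟨X', hX', hle, i₀, hlt⟩
  have ha' : ∀ i j, 0 ≤ a i j := fun i j => (ha i j).le
  obtain ⟨j, hj⟩ := exists_pos_of_payoff_pos ha' ((payoff_nonneg ha' hXs i₀).trans_lt hlt)
  obtain ⟨Y, hY, hgt⟩ := exists_isAlloc_payoff_gt ha hX' hle hlt hj
  exact (hmax Y hY).not_gt (min3_lt_min3 hgt)

theorem maxmin_is_pareto_optimal (m : ℕ) (a : Fin 3 → Fin m → ℝ)
    (ha : ∀ i j, 0 < a i j) (hrow : ∀ i, ∑ j, a i j = 1)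
    (Xs : Fin 3 → Fin m → ℝ) (hXs : IsAlloc Xs)
    (hmax : ∀ X : Fin 3 → Fin m → ℝ, IsAlloc X →
      min (min (payoff a X 0) (payoff a X 1)) (payoff a X 2) ≤
        min (min (payoff a Xs 0) (payoff a Xs 1)) (payoff a Xs 2)) :
    ¬ ∃ X' : Fin 3 → Fin m → ℝ, IsAlloc X' ∧
      (∀ i, payoff a Xs i ≤ payoff a X' i) ∧ ∃ i, payoff a Xs i < payoff a X' i :=
  maxmin_is_pareto_optimal_general m a ha Xs hXs hmax
end

section
/- Under MAC, if γ ∈ ℝ³ has all strictly positive coordinates and X is an allocation such that x_{ik} > 0 implies γ_i a_{ik} ≥ γ_j a_{jk} for all players j, then X is Pareto optimal. -/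
/-!
A γ-rule allocation gives every good to players maximizing `γ i * a i k`, so it maximizes the
weighted welfare `∑ i, γ i * a_i(X)` good by good over all allocations. Since every `γ i` is
positive, a Pareto improvement would strictly increase this welfare, which is impossible.
-/

section WeightedAverage

variable {ι : Type*} [Fintype ι] {w x y : ι → ℝ}

theorem exists_pos_of_sum_eq_one (hsum : ∑ i, x i = 1) : ∃ i, 0 < x i := by
  by_contra! h
  have : ∑ i, x i ≤ 0 := Finset.sum_nonpos fun i _ => h i
  linarith

theorem sum_mul_le_of_forall_le {c : ℝ} (hw : ∀ i, w i ≤ c) (hy : ∀ i, 0 ≤ y i)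
    (hsum : ∑ i, y i = 1) : ∑ i, w i * y i ≤ c :=
  calc ∑ i, w i * y i ≤ ∑ i, c * y i :=
        Finset.sum_le_sum fun i _ => mul_le_mul_of_nonneg_right (hw i) (hy i)
    _ = c := by rw [← Finset.mul_sum, hsum, mul_one]

theorem sum_mul_eq_of_support_maximizes (hmax : ∀ j, 0 < x j → ∀ k, w k ≤ w j) {i : ι}
    (hi : 0 < x i) (hx : ∀ j, 0 ≤ x j) (hsum : ∑ j, x j = 1) : ∑ j, w j * x j = w i := by
  have hterm : ∀ j, w j * x j = w i * x j := by
    intro j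
    rcases (hx j).eq_or_lt with h0 | hpos
    · simp [← h0]
    · rw [le_antisymm (hmax i hi j) (hmax j hpos i)]
  rw [Finset.sum_congr rfl fun j _ => hterm j, ← Finset.mul_sum, hsum, mul_one]

theorem sum_mul_le_sum_mul_of_support_maximizes (hmax : ∀ j, 0 < x j → ∀ k, w k ≤ w j)
    (hx : ∀ j, 0 ≤ x j) (hxsum : ∑ j, x j = 1) (hy : ∀ j, 0 ≤ y j) (hysum : ∑ j, y j = 1) :
    ∑ j, w j * y j ≤ ∑ j, w j * x j := by
  obtain ⟨i, hi⟩ := exists_pos_of_sum_eq_one hxsum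
  rw [sum_mul_eq_of_support_maximizes hmax hi hx hxsum]
  exact sum_mul_le_of_forall_le (hmax i hi) hy hysum

theorem sum_mul_lt_sum_mul_of_le_of_lt {γ u v : ι → ℝ} (hγ : ∀ i, 0 < γ i)
    (hle : ∀ i, u i ≤ v i) {i₀ : ι} (hlt : u i₀ < v i₀) :
    ∑ i, γ i * u i < ∑ i, γ i * v i :=
  Finset.sum_lt_sum (fun i _ => mul_le_mul_of_nonneg_left (hle i) (hγ i).le)
    ⟨i₀, Finset.mem_univ i₀, mul_lt_mul_of_pos_left hlt (hγ i₀)⟩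

end WeightedAverage

section Welfare

variable {m : ℕ} {a X X' : Fin 3 → Fin m → ℝ} {γ : Fin 3 → ℝ}

theorem sum_mul_payoff_eq_sum_goods :
    ∑ i, γ i * payoff a X i = ∑ k, ∑ i, γ i * a i k * X i k := by
  simp only [payoff, Finset.mul_sum, mul_assoc]
  exact Finset.sum_comm

theorem sum_mul_payoff_le_of_gamma_rule (hX : IsAlloc X) (hX' : IsAlloc X')
    (hrule : ∀ i k, 0 < X i k → ∀ j, γ j * a j k ≤ γ i * a i k) :
    ∑ i, γ i * payoff a X' i ≤ ∑ i, γ i * payoff a X i := by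
  rw [sum_mul_payoff_eq_sum_goods, sum_mul_payoff_eq_sum_goods]
  exact Finset.sum_le_sum fun k _ =>
    sum_mul_le_sum_mul_of_support_maximizes (fun i hi j => hrule i k hi j)
      (fun i => hX.1 i k) (hX.2 k) (fun i => hX'.1 i k) (hX'.2 k)

end Welfare

theorem gamma_rule_is_pareto_optimal_general (m : ℕ) (a : Fin 3 → Fin m → ℝ)
    (γ : Fin 3 → ℝ) (hγ : ∀ i, 0 < γ i)
    (X : Fin 3 → Fin m → ℝ) (hX : IsAlloc X)
    (hrule : ∀ i k, 0 < X i k → ∀ j, γ j * a j k ≤ γ i * a i k) :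
    ¬ ∃ X' : Fin 3 → Fin m → ℝ, IsAlloc X' ∧
      (∀ i, payoff a X i ≤ payoff a X' i) ∧ ∃ i, payoff a X i < payoff a X' i := by
  rintro ⟨X', hX', hle, i₀, hlt⟩
  have hmax := sum_mul_payoff_le_of_gamma_rule hX hX' hrule
  have hstrict := sum_mul_lt_sum_mul_of_le_of_lt hγ hle hlt
  exact hmax.not_gt hstrict

theorem gamma_rule_is_pareto_optimal (m : ℕ) (a : Fin 3 → Fin m → ℝ)
    (ha : ∀ i j, 0 < a i j) (hrow : ∀ i, ∑ j, a i j = 1)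
    (γ : Fin 3 → ℝ) (hγ : ∀ i, 0 < γ i)
    (X : Fin 3 → Fin m → ℝ) (hX : IsAlloc X)
    (hrule : ∀ i k, 0 < X i k → ∀ j, γ j * a j k ≤ γ i * a i k) :
    ¬ ∃ X' : Fin 3 → Fin m → ℝ, IsAlloc X' ∧
      (∀ i, payoff a X i ≤ payoff a X' i) ∧ ∃ i, payoff a X i < payoff a X' i :=
  gamma_rule_is_pareto_optimal_general m a γ hγ X hX hrule
end

section
/- If all goods ℓ in a set K satisfy γ_i a_{iℓ} = γ_j a_{jℓ}, then any point on the segment [a(X_i^K), a(X_j^K)] can be achieved by an allocation that splits at most one good of K between players i and j, assigning every other good of K entirely to i or to j. -/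
/-!
Fill player `i`'s share greedily along a fixed order of the goods. With `P ℓ` the total value of
the goods before `ℓ`, good `ℓ` occupies the interval `[P ℓ, P ℓ + a ℓ]` of cumulative value, and
giving player `i` the fraction `clamp ((x - P ℓ) / a ℓ)` of it yields total value `x`. Since these
intervals have disjoint interiors, only the good whose interval contains `x` in its interior is
split. As `γi a_{iℓ} = γj a_{jℓ}`, the values of player `j` are proportional to those of player `i`,
so the same fractions give `j` the complementary share of its total.
-/

open Set

lemma clamp_mul_eq_min_sub_min {a : ℝ} (ha : 0 ≤ a) (x p : ℝ) :
    min 1 (max 0 ((x - p) / a)) * a = min x (p + a) - min x p := by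
  rcases ha.eq_or_lt with rfl | ha
  · simp
  rw [min_mul_of_nonneg _ _ ha.le, max_mul_of_nonneg _ _ ha.le, div_mul_cancel₀ _ ha.ne',
    one_mul, zero_mul]
  simp only [min_def, max_def]
  split_ifs <;> linarith

lemma lt_and_lt_add_of_clamp_ne {a x p : ℝ} (ha : 0 ≤ a)
    (h0 : min 1 (max 0 ((x - p) / a)) ≠ 0) (h1 : min 1 (max 0 ((x - p) / a)) ≠ 1) :
    p < x ∧ x < p + a := by
  have hpos : 0 < (x - p) / a := by
    by_contra! h
    exact h0 (by simp [max_eq_left h])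
  have hlt : (x - p) / a < 1 := by
    by_contra! h
    exact h1 (min_eq_left (h.trans (le_max_right _ _)))
  have ha' : 0 < a := ha.lt_of_ne fun h => by simp [← h] at hpos
  rw [div_pos_iff_of_pos_right ha', sub_pos] at hpos
  rw [div_lt_one ha'] at hlt
  constructor <;> linarith

namespace Fin

variable {M : Type*} [AddCommMonoid M] {n : ℕ}

lemma partialSum_last (a : Fin n → M) : partialSum a (last n) = ∑ i, a i := by
  rw [partialSum, val_last, List.take_of_length_le (by simp), List.sum_ofFn]

lemma monotone_partialSum [PartialOrder M] [IsOrderedAddMonoid M] {a : Fin n → M}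
    (ha : ∀ i, 0 ≤ a i) : Monotone (partialSum a) :=
  monotone_iff_le_succ.2 fun i => by
    rw [partialSum_succ]
    exact le_add_of_nonneg_right (ha i)

end Fin

section GreedyFraction

variable {n : ℕ} (a : Fin n → ℝ) (x : ℝ)

noncomputable def greedyFraction (i : Fin n) : ℝ :=
  min 1 (max 0 ((x - Fin.partialSum a i.castSucc) / a i))

lemma greedyFraction_mem_Icc (i : Fin n) : greedyFraction a x i ∈ Icc 0 1 :=
  ⟨le_min zero_le_one (le_max_left _ _), min_le_left _ _⟩

variable {a x}

lemma partialSum_greedyFraction_mul (ha : ∀ i, 0 ≤ a i) (hx : 0 ≤ x) (j : Fin (n + 1)) :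
    Fin.partialSum (fun i => greedyFraction a x i * a i) j = min x (Fin.partialSum a j) := by
  induction j using Fin.induction with
  | zero => simp [hx]
  | succ i ih =>
    rw [Fin.partialSum_succ, ih, greedyFraction, clamp_mul_eq_min_sub_min (ha i),
      ← Fin.partialSum_succ]
    ring

lemma sum_greedyFraction_mul (ha : ∀ i, 0 ≤ a i) (hx : x ∈ Icc 0 (∑ i, a i)) :
    ∑ i, greedyFraction a x i * a i = x := by
  rw [← Fin.partialSum_last, partialSum_greedyFraction_mul ha hx.1, Fin.partialSum_last,
    min_eq_left hx.2]

lemma subsingleton_greedyFraction_ne_zero_ne_one (ha : ∀ i, 0 ≤ a i) :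
    {i | greedyFraction a x i ≠ 0 ∧ greedyFraction a x i ≠ 1}.Subsingleton := by
  rintro i ⟨hi0, hi1⟩ j ⟨hj0, hj1⟩
  by_contra hne
  wlog hij : i < j generalizing i j
  · exact this hj0 hj1 hi0 hi1 (Ne.symm hne) ((Ne.lt_or_gt hne).resolve_left hij)
  have hi := lt_and_lt_add_of_clamp_ne (ha i) hi0 hi1
  have hj := lt_and_lt_add_of_clamp_ne (ha j) hj0 hj1
  have hsucc_le : Fin.partialSum a i.succ ≤ Fin.partialSum a j.castSucc :=
    Fin.monotone_partialSum ha (Fin.succ_le_castSucc_iff.2 hij)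
  rw [Fin.partialSum_succ] at hsucc_le
  linarith

end GreedyFraction

theorem segment_point_splits_at_most_one_good_general (r : ℕ)
    (ai aj : Fin r → ℝ)
    (hai : ∀ ℓ, 0 < ai ℓ)
    (γi γj : ℝ) (hγj : 0 < γj)
    (hdisp : ∀ ℓ, γi * ai ℓ = γj * aj ℓ)
    (c : Fin 3 → ℝ) :
    ∀ p ∈ segment ℝ (c + ![∑ ℓ, ai ℓ, 0, 0]) (c + ![0, ∑ ℓ, aj ℓ, 0]),
      ∃ s : Fin r → ℝ,  -- s ℓ is the fraction of good ℓ given to player i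
        (∀ ℓ, 0 ≤ s ℓ ∧ s ℓ ≤ 1) ∧
        {ℓ : Fin r | s ℓ ≠ 0 ∧ s ℓ ≠ 1}.ncard ≤ 1 ∧
        p = c + ![∑ ℓ, s ℓ * ai ℓ, ∑ ℓ, (1 - s ℓ) * aj ℓ, 0] := by
  rintro p ⟨u, v, hu, hv, huv, rfl⟩
  have hai' : ∀ ℓ, 0 ≤ ai ℓ := fun ℓ => (hai ℓ).le
  have hx : u * ∑ ℓ, ai ℓ ∈ Icc 0 (∑ ℓ, ai ℓ) :=
    ⟨mul_nonneg hu (Finset.sum_nonneg fun ℓ _ => hai' ℓ),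
      mul_le_of_le_one_left (Finset.sum_nonneg fun ℓ _ => hai' ℓ) (by linarith)⟩
  set s := greedyFraction ai (u * ∑ ℓ, ai ℓ)
  have hsi : ∑ ℓ, s ℓ * ai ℓ = u * ∑ ℓ, ai ℓ := sum_greedyFraction_mul hai' hx
  have haj : ∀ ℓ, aj ℓ = γi / γj * ai ℓ := fun ℓ => by
    field_simp
    linarith [hdisp ℓ]
  have hsj : ∑ ℓ, s ℓ * aj ℓ = u * ∑ ℓ, aj ℓ := by
    simp only [haj, mul_left_comm _ (γi / γj), ← Finset.mul_sum, hsi]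
  obtain rfl : v = 1 - u := by linarith
  refine ⟨s, fun ℓ => greedyFraction_mem_Icc ai _ ℓ,
    Set.ncard_le_one_iff_subsingleton.2 (subsingleton_greedyFraction_ne_zero_ne_one hai'), ?_⟩
  simp only [sub_mul, one_mul, Finset.sum_sub_distrib, hsi, hsj]
  ext k
  fin_cases k <;> simp [Matrix.vecHead, Matrix.vecTail] <;> ring

theorem segment_point_splits_at_most_one_good (r : ℕ)
    (ai aj : Fin r → ℝ)
    (hai : ∀ ℓ, 0 < ai ℓ) (haj : ∀ ℓ, 0 < aj ℓ)
    (γi γj : ℝ) (hγi : 0 < γi) (hγj : 0 < γj)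
    (hdisp : ∀ ℓ, γi * ai ℓ = γj * aj ℓ)
    (c : Fin 3 → ℝ) :
    ∀ p ∈ segment ℝ (c + ![∑ ℓ, ai ℓ, 0, 0]) (c + ![0, ∑ ℓ, aj ℓ, 0]),
      ∃ s : Fin r → ℝ,  -- s ℓ is the fraction of good ℓ given to player i
        (∀ ℓ, 0 ≤ s ℓ ∧ s ℓ ≤ 1) ∧
        {ℓ : Fin r | s ℓ ≠ 0 ∧ s ℓ ≠ 1}.ncard ≤ 1 ∧
        p = c + ![∑ ℓ, s ℓ * ai ℓ, ∑ ℓ, (1 - s ℓ) * aj ℓ, 0] :=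
  segment_point_splits_at_most_one_good_general r ai aj hai γi γj hγj hdisp c
end

section
/- For two goods with normalized evaluation vectors p, q in the open 2-simplex, the supporting segments of p and q (segments joining each point to the three vertices of the simplex) intersect in exactly one point if and only if neither p nor q lies on a supporting segment of the other. -/
/-- The `i`-th vertex of the 2-simplex in ℝ³. -/
noncomputable def vert (i : Fin 3) : Fin 3 → ℝ := Pi.single i 1

/-- Two points of the simplex are support independent if neither lies on a
supporting segment (segment joining the point to a vertex) of the other. -/
def SIndep (p q : Fin 3 → ℝ) : Prop :=
  (∀ i, p ∉ segment ℝ q (vert i)) ∧ ∀ i, q ∉ segment ℝ p (vert i)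

/-!
Write `r = p / q` coordinatewise. A common point of the open segments `(p, eᵢ)` and `(q, eⱼ)` has
coordinates proportional to `p` off `i` and to `q` off `j`; hence `i ≠ j`, the ratio at the third
index `k` is the proportionality factor, and `r i < r k < r j`. So such a point exists only for
`i = argmin r`, `j = argmax r`, and is then determined by `r k`; conversely these indices do give
a common point when the ratios are distinct. Two ratios `r a = r b ≤ 1` (resp. `≥ 1`) say exactly
that `p ∈ [q, e_c]` (resp. `q ∈ [p, e_c]`) for the third index `c`, so s-independence means that
`r` is injective. If instead `p ∈ [q, eᵢ]`, the whole open segment `(p, eᵢ)` lies in `(q, eᵢ)`.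
-/

open Set Function Finset

section Segments

variable {𝕜 E : Type*} [Field 𝕜] [LinearOrder 𝕜] [IsStrictOrderedRing 𝕜]
  [AddCommGroup E] [Module 𝕜 E]

theorem openSegment_subset_openSegment_of_mem_segment {x y v : E} (hx : x ∈ segment 𝕜 y v)
    (hxv : x ≠ v) : openSegment 𝕜 x v ⊆ openSegment 𝕜 y v := by
  rintro z ⟨a, b, ha, hb, hab, rfl⟩
  obtain ⟨s, t, hs, ht, hst, rfl⟩ := hx
  have hs : 0 < s := hs.lt_of_ne <| by
    rintro rfl
    exact hxv (by simp [show t = 1 by linarith])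
  exact ⟨a * s, a * t + b, by positivity, by positivity, by linear_combination a * hst + hab,
    by module⟩

theorem openSegment_nontrivial {x y : E} (h : x ≠ y) : (openSegment 𝕜 x y).Nontrivial := by
  rw [openSegment_eq_image_lineMap]
  exact (Ioo_infinite zero_lt_one).nontrivial.image (AffineMap.lineMap_injective 𝕜 h)

end Segments

theorem Fintype.eq_of_sum_eq_of_forall_ne {ι M : Type*} [Fintype ι] [DecidableEq ι]
    [AddCommGroup M] {x y : ι → M} (j : ι) (hsum : ∑ m, x m = ∑ m, y m)
    (h : ∀ m ≠ j, x m = y m) : x = y := by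
  funext m
  obtain rfl | hm := eq_or_ne m j
  · rw [← add_sum_erase _ _ (mem_univ m), ← add_sum_erase _ _ (mem_univ m),
      Finset.sum_congr rfl fun n hn => h n (ne_of_mem_erase hn)] at hsum
    exact add_right_cancel hsum
  · exact h m hm

theorem fin_three_exists_third {a b : Fin 3} (hab : a ≠ b) :
    ∃ c, c ≠ a ∧ c ≠ b ∧ ∀ m, m = a ∨ m = b ∨ m = c := by
  revert a b
  decide

def openStar (p : Fin 3 → ℝ) : Set (Fin 3 → ℝ) := ⋃ i, openSegment ℝ p (vert i)

section Coordinates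

variable {p q : Fin 3 → ℝ} {i j : Fin 3} {a b c d : ℝ}

theorem smul_add_smul_vert_apply_of_ne {m : Fin 3} (h : m ≠ i) :
    (a • p + b • vert i) m = a * p m := by
  simp [vert, h]

theorem smul_add_smul_vert_apply_self : (a • p + b • vert i) i = a * p i + b := by
  simp [vert]

theorem sum_smul_add_smul_vert : ∑ m, (a • p + b • vert i) m = a * ∑ m, p m + b := by
  simp [vert, sum_add_distrib, ← mul_sum]

theorem ne_vert_of_pos (hp : ∀ m, 0 < p m) (i : Fin 3) : p ≠ vert i := by
  obtain ⟨m, hm⟩ := exists_ne i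
  intro h
  simpa [h, vert, hm] using hp m

theorem div_apply_eq_of_smul_add_smul_vert_eq (hq : ∀ m, 0 < q m) (ha : 0 < a)
    (h : a • p + b • vert i = c • q + d • vert j) {m : Fin 3} (hmi : m ≠ i) (hmj : m ≠ j) :
    (p / q) m = c / a := by
  have hm := congrFun h m
  rw [smul_add_smul_vert_apply_of_ne hmi, smul_add_smul_vert_apply_of_ne hmj] at hm
  rw [Pi.div_apply, div_eq_div_iff (hq m).ne' ha.ne']
  linarith

theorem div_apply_lt_of_smul_add_smul_vert_eq (hq : ∀ m, 0 < q m) (ha : 0 < a) (hb : 0 < b)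
    (h : a • p + b • vert i = c • q + d • vert j) (hij : i ≠ j) : (p / q) i < c / a := by
  have hi := congrFun h i
  rw [smul_add_smul_vert_apply_self, smul_add_smul_vert_apply_of_ne hij] at hi
  rw [Pi.div_apply, div_lt_div_iff₀ (hq i) ha]
  linarith

theorem lt_div_apply_of_smul_add_smul_vert_eq (hq : ∀ m, 0 < q m) (ha : 0 < a) (hd : 0 < d)
    (h : a • p + b • vert i = c • q + d • vert j) (hij : i ≠ j) : c / a < (p / q) j := by
  have hj := congrFun h j
  rw [smul_add_smul_vert_apply_self, smul_add_smul_vert_apply_of_ne hij.symm] at hj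
  rw [Pi.div_apply, div_lt_div_iff₀ ha (hq j)]
  linarith

theorem mul_eq_one_of_smul_add_smul_vert_eq (hq : ∀ m, 0 < q m) (ha : 0 < a) (hab : a + b = 1)
    (h : a • p + b • vert i = c • q + d • vert j) (hij : i ≠ j) {k : Fin 3} (hki : k ≠ i)
    (hkj : k ≠ j) : a * (1 - p i + (p / q) k * q i) = 1 := by
  have hi := congrFun h i
  rw [smul_add_smul_vert_apply_self, smul_add_smul_vert_apply_of_ne hij] at hi
  rw [div_apply_eq_of_smul_add_smul_vert_eq hq ha h hki hkj]
  field_simp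
  linarith

end Coordinates

section Simplex

variable {p q : Fin 3 → ℝ}

theorem mem_segment_vert_of_forall_ne (hp : ∑ m, p m = 1) (hq : ∑ m, q m = 1) {c : Fin 3}
    {t : ℝ} (ht₀ : 0 ≤ t) (ht₁ : t ≤ 1) (h : ∀ m ≠ c, p m = t * q m) :
    p ∈ segment ℝ q (vert c) :=
  ⟨t, 1 - t, ht₀, by linarith, by ring, Fintype.eq_of_sum_eq_of_forall_ne c
    (by rw [sum_smul_add_smul_vert, hp, hq]; ring)
    fun m hm => by rw [smul_add_smul_vert_apply_of_ne hm, h m hm]⟩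

theorem exists_mem_segment_vert_of_div_apply_eq (hp : (∀ m, 0 < p m) ∧ ∑ m, p m = 1)
    (hq : (∀ m, 0 < q m) ∧ ∑ m, q m = 1) {a b : Fin 3} (hab : a ≠ b)
    (h : (p / q) a = (p / q) b) (hle : p a ≤ q a) : ∃ c, p ∈ segment ℝ q (vert c) := by
  obtain ⟨c, -, -, hcover⟩ := fin_three_exists_third hab
  refine ⟨c, mem_segment_vert_of_forall_ne hp.2 hq.2 (div_nonneg (hp.1 a).le (hq.1 a).le)
    ((div_le_one (hq.1 a)).2 hle) fun m hm => ?_⟩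
  obtain rfl | rfl | rfl := hcover m
  · exact (div_mul_cancel₀ _ (hq.1 m).ne').symm
  · exact (div_mul_cancel₀ _ (hq.1 m).ne').symm.trans (congrArg (· * q m) h.symm)
  · exact absurd rfl hm

theorem SIndep.injective_div (hp : (∀ m, 0 < p m) ∧ ∑ m, p m = 1)
    (hq : (∀ m, 0 < q m) ∧ ∑ m, q m = 1) (hs : SIndep p q) : Injective (p / q) := by
  intro a b h
  by_contra hab
  rcases le_total (p a) (q a) with hle | hle
  · obtain ⟨c, hc⟩ := exists_mem_segment_vert_of_div_apply_eq hp hq hab h hle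
    exact hs.1 c hc
  · have h' : (q / p) a = (q / p) b := by
      simp only [Pi.div_apply] at h ⊢
      rw [← inv_div, h, inv_div]
    obtain ⟨c, hc⟩ := exists_mem_segment_vert_of_div_apply_eq hq hp hab h' hle
    exact hs.2 c hc

theorem extremal_div_of_mem_openSegment_inter (hq : ∀ m, 0 < q m)
    (hinj : Injective (p / q)) {i j : Fin 3} {z : Fin 3 → ℝ}
    (hzp : z ∈ openSegment ℝ p (vert i)) (hzq : z ∈ openSegment ℝ q (vert j)) :
    i ≠ j ∧ (∀ m ≠ i, (p / q) i < (p / q) m) ∧ ∀ m ≠ j, (p / q) m < (p / q) j := by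
  obtain ⟨a, b, ha, hb, -, rfl⟩ := hzp
  obtain ⟨c, d, -, hd, -, h⟩ := hzq
  have hij : i ≠ j := by
    rintro rfl
    obtain ⟨m, hm⟩ := exists_ne i
    obtain ⟨n, hni, hnm, -⟩ := fin_three_exists_third hm.symm
    exact hnm (hinj ((div_apply_eq_of_smul_add_smul_vert_eq hq ha h.symm hni hni).trans
      (div_apply_eq_of_smul_add_smul_vert_eq hq ha h.symm hm hm).symm))
  have hlt := div_apply_lt_of_smul_add_smul_vert_eq hq ha hb h.symm hij
  have hgt := lt_div_apply_of_smul_add_smul_vert_eq hq ha hd h.symm hij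
  refine ⟨hij, fun m hmi => ?_, fun m hmj => ?_⟩
  · obtain rfl | hmj := eq_or_ne m j
    · exact hlt.trans hgt
    · exact hlt.trans_eq (div_apply_eq_of_smul_add_smul_vert_eq hq ha h.symm hmi hmj).symm
  · obtain rfl | hmi := eq_or_ne m i
    · exact hlt.trans hgt
    · exact (div_apply_eq_of_smul_add_smul_vert_eq hq ha h.symm hmi hmj).trans_lt hgt

theorem openStar_inter_subsingleton (hq : ∀ m, 0 < q m) (hinj : Injective (p / q)) :
    (openStar p ∩ openStar q).Subsingleton := by
  rintro z ⟨hzp, hzq⟩ z' ⟨hzp', hzq'⟩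
  obtain ⟨i, hzp⟩ := mem_iUnion.1 hzp
  obtain ⟨j, hzq⟩ := mem_iUnion.1 hzq
  obtain ⟨i', hzp'⟩ := mem_iUnion.1 hzp'
  obtain ⟨j', hzq'⟩ := mem_iUnion.1 hzq'
  obtain ⟨hij, hmin, hmax⟩ := extremal_div_of_mem_openSegment_inter hq hinj hzp hzq
  obtain ⟨-, hmin', hmax'⟩ := extremal_div_of_mem_openSegment_inter hq hinj hzp' hzq'
  obtain rfl : i' = i := by_contra fun h => (hmin _ h).asymm (hmin' _ (Ne.symm h))
  obtain rfl : j' = j := by_contra fun h => (hmax _ h).asymm (hmax' _ (Ne.symm h))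
  obtain ⟨k, hki, hkj, -⟩ := fin_three_exists_third hij
  obtain ⟨a, b, ha, -, hab, rfl⟩ := hzp
  obtain ⟨a', b', ha', -, hab', rfl⟩ := hzp'
  obtain ⟨c, d, -, -, -, h⟩ := hzq
  obtain ⟨c', d', -, -, -, h'⟩ := hzq'
  have e := mul_eq_one_of_smul_add_smul_vert_eq hq ha hab h.symm hij hki hkj
  have e' := mul_eq_one_of_smul_add_smul_vert_eq hq ha' hab' h'.symm hij hki hkj
  obtain rfl : a = a' := mul_right_cancel₀ (right_ne_zero_of_mul_eq_one e) (e.trans e'.symm)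
  obtain rfl : b = b' := by linarith
  rfl

theorem openSegment_inter_nonempty_of_extremal_div (hp : (∀ m, 0 < p m) ∧ ∑ m, p m = 1)
    (hq : (∀ m, 0 < q m) ∧ ∑ m, q m = 1) {i j : Fin 3} (hij : i ≠ j)
    (hmin : ∀ m ≠ i, (p / q) i < (p / q) m) (hmax : ∀ m ≠ j, (p / q) m < (p / q) j) :
    (openSegment ℝ p (vert i) ∩ openSegment ℝ q (vert j)).Nonempty := by
  obtain ⟨k, hki, hkj, hcover⟩ := fin_three_exists_third hij
  set ρ := (p / q) k
  have hρk : ρ * q k = p k := div_mul_cancel₀ _ (hq.1 k).ne'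
  have hρi : p i < ρ * q i := (div_lt_iff₀ (hq.1 i)).1 (hmin k hki)
  have hρj : ρ * q j < p j := (lt_div_iff₀ (hq.1 j)).1 (hmax k hkj)
  have hρ : 0 < ρ := div_pos (hp.1 k) (hq.1 k)
  set a := (1 - p i + ρ * q i)⁻¹
  have ha : a * (1 - p i + ρ * q i) = 1 := inv_mul_cancel₀ (by linarith [hq.1 i, hp.1 i])
  have ha₀ : 0 < a := inv_pos.2 (by linarith)
  have ha₁ : a < 1 := inv_lt_one_of_one_lt₀ (by linarith)
  -- The `j`-th coordinate is forced by the other two, as both sides have coordinate sum `1`.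
  have h : a • p + (1 - a) • vert i = (ρ * a) • q + (1 - ρ * a) • vert j := by
    refine Fintype.eq_of_sum_eq_of_forall_ne j ?_ fun m hmj => ?_
    · rw [sum_smul_add_smul_vert, sum_smul_add_smul_vert, hp.2, hq.2]
      ring
    · rw [smul_add_smul_vert_apply_of_ne hmj]
      obtain rfl | rfl | rfl := hcover m
      · rw [smul_add_smul_vert_apply_self]
        linear_combination -ha
      · exact absurd rfl hmj
      · rw [smul_add_smul_vert_apply_of_ne hki]
        linear_combination (-a) * hρk
  have hc₁ : 0 < 1 - ρ * a := by
    have hj := congrFun h j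
    rw [smul_add_smul_vert_apply_of_ne hij.symm, smul_add_smul_vert_apply_self] at hj
    nlinarith
  exact ⟨_, ⟨a, 1 - a, ha₀, by linarith, by ring, rfl⟩,
    ⟨ρ * a, 1 - ρ * a, by positivity, hc₁, by ring, h.symm⟩⟩

theorem openStar_inter_nonempty (hp : (∀ m, 0 < p m) ∧ ∑ m, p m = 1)
    (hq : (∀ m, 0 < q m) ∧ ∑ m, q m = 1) (hinj : Injective (p / q)) :
    (openStar p ∩ openStar q).Nonempty := by
  obtain ⟨i, hi⟩ := Finite.exists_min (p / q)
  obtain ⟨j, hj⟩ := Finite.exists_max (p / q)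
  have hmin : ∀ m ≠ i, (p / q) i < (p / q) m := fun m hm => (hi m).lt_of_ne (hinj.ne hm.symm)
  have hmax : ∀ m ≠ j, (p / q) m < (p / q) j := fun m hm => (hj m).lt_of_ne (hinj.ne hm)
  have hij : i ≠ j := by
    rintro rfl
    obtain ⟨m, hm⟩ := exists_ne i
    exact (hmin m hm).asymm (hmax m hm)
  obtain ⟨z, hzp, hzq⟩ := openSegment_inter_nonempty_of_extremal_div hp hq hij hmin hmax
  exact ⟨z, mem_iUnion.2 ⟨i, hzp⟩, mem_iUnion.2 ⟨j, hzq⟩⟩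

theorem not_subsingleton_openStar_inter_of_mem_segment (hp : ∀ m, 0 < p m) {i : Fin 3}
    (h : p ∈ segment ℝ q (vert i)) : ¬(openStar p ∩ openStar q).Subsingleton := fun hs =>
  (openSegment_nontrivial (ne_vert_of_pos hp i)).not_subsingleton <| hs.anti <|
    subset_inter (subset_iUnion (fun i => openSegment ℝ p (vert i)) i)
      ((openSegment_subset_openSegment_of_mem_segment h (ne_vert_of_pos hp i)).trans
        (subset_iUnion (fun i => openSegment ℝ q (vert i)) i))

end Simplex

theorem supporting_segments_unique_intersection_iff_sIndep_general
    (p q : Fin 3 → ℝ)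
    (hp : (∀ i, 0 < p i) ∧ ∑ i, p i = 1)
    (hq : (∀ i, 0 < q i) ∧ ∑ i, q i = 1) :
    (∃! z, z ∈ (⋃ i, openSegment ℝ p (vert i)) ∩ ⋃ i, openSegment ℝ q (vert i)) ↔
      SIndep p q := by
  change (∃! z, z ∈ openStar p ∩ openStar q) ↔ _
  constructor
  · intro h
    have hs : (openStar p ∩ openStar q).Subsingleton := fun x hx y hy => h.unique hx hy
    refine ⟨fun i hi => ?_, fun i hi => ?_⟩
    · exact not_subsingleton_openStar_inter_of_mem_segment hp.1 hi hs
    · exact not_subsingleton_openStar_inter_of_mem_segment hq.1 hi (inter_comm _ _ ▸ hs)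
  · intro hs
    have hinj := hs.injective_div hp hq
    obtain ⟨z, hz⟩ := openStar_inter_nonempty hp hq hinj
    exact ⟨z, hz, fun y hy => openStar_inter_subsingleton hq.1 hinj hy hz⟩

theorem supporting_segments_unique_intersection_iff_sIndep
    (p q : Fin 3 → ℝ)
    (hp : (∀ i, 0 < p i) ∧ ∑ i, p i = 1)
    (hq : (∀ i, 0 < q i) ∧ ∑ i, q i = 1)
    (hpq : p ≠ q) :
    (∃! z, z ∈ (⋃ i, openSegment ℝ p (vert i)) ∩ ⋃ i, openSegment ℝ q (vert i)) ↔
      SIndep p q :=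
  supporting_segments_unique_intersection_iff_sIndep_general p q hp hq
end

section
/- If all m goods are pairwise s-independent and no intersection point of two disputing segments coincides with a good's location in the RNS, the number of Pareto faces is at most m + C(m,2) = m(m+1)/2. -/
/-- Intersection points of the (open) supporting segments of two distinct goods. -/
def interPts {m : ℕ} (P : Fin m → Fin 3 → ℝ) : Set (Fin 3 → ℝ) :=
  {x | ∃ j k, j ≠ k ∧
    x ∈ (⋃ i, openSegment ℝ (P j) (vert i)) ∩ ⋃ i, openSegment ℝ (P k) (vert i)}

open Finset

def supportStar (p : Fin 3 → ℝ) : Set (Fin 3 → ℝ) :=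
  ⋃ i, openSegment ℝ p (vert i)

@[simp]
lemma vert_self (i : Fin 3) : vert i i = 1 :=
  Pi.single_eq_same i 1

@[simp]
lemma vert_of_ne {i a : Fin 3} (h : a ≠ i) : vert i a = 0 :=
  Pi.single_eq_of_ne h 1

lemma vert_nonneg (i a : Fin 3) : 0 ≤ vert i a := by
  by_cases h : a = i <;> simp [h]

lemma exists_of_mem_openSegment_vert {p x : Fin 3 → ℝ} {i : Fin 3}
    (hx : x ∈ openSegment ℝ p (vert i)) :
    ∃ c : ℝ, 0 < c ∧ c < 1 ∧ ∀ a, x a = c * p a + (1 - c) * vert i a := by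
  obtain ⟨c, d, hc, hd, hcd, rfl⟩ := hx
  obtain rfl : d = 1 - c := eq_sub_of_add_eq' hcd
  exact ⟨c, hc, by linarith, fun a => rfl⟩

lemma mem_segment_vert_of_forall_ne_s18 {p q : Fin 3 → ℝ} (hps : ∑ a, p a = 1)
    (hqs : ∑ a, q a = 1) {i : Fin 3} {c : ℝ} (hc0 : 0 ≤ c) (hc1 : c ≤ 1)
    (h : ∀ a ≠ i, q a = c * p a) : q ∈ segment ℝ p (vert i) := by
  have hqi : q i = c * p i + (1 - c) := by
    have hp := add_sum_erase univ p (mem_univ i)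
    have hq := add_sum_erase univ q (mem_univ i)
    have : ∑ a ∈ univ.erase i, q a = c * ∑ a ∈ univ.erase i, p a := by
      rw [mul_sum]
      exact sum_congr rfl fun a ha => h a (ne_of_mem_erase ha)
    rw [hps] at hp
    rw [hqs] at hq
    linear_combination hq - this - c * hp
  refine ⟨c, 1 - c, hc0, by linarith, by ring, funext fun a => ?_⟩
  by_cases ha : a = i
  · subst ha
    simp [hqi]
  · simp [ha, h a ha]

lemma not_sIndep_of_forall_ne_eq_mul {p q : Fin 3 → ℝ} (hps : ∑ a, p a = 1)
    (hqs : ∑ a, q a = 1) {i : Fin 3} {c : ℝ} (hc : 0 < c) (h : ∀ a ≠ i, q a = c * p a) :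
    ¬SIndep p q := by
  rintro ⟨hpq, hqp⟩
  rcases le_total c 1 with hc1 | hc1
  · exact hqp i (mem_segment_vert_of_forall_ne_s18 hps hqs hc.le hc1 h)
  · refine hpq i (mem_segment_vert_of_forall_ne_s18 hqs hps (inv_nonneg.2 hc.le)
      (inv_le_one_of_one_le₀ hc1) fun a ha => ?_)
    rw [h a ha, inv_mul_cancel_left₀ hc.ne']

lemma SIndep.disjoint_openSegment_vert {p q : Fin 3 → ℝ} (hps : ∑ a, p a = 1)
    (hqs : ∑ a, q a = 1) (hpq : SIndep p q) (i : Fin 3) :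
    Disjoint (openSegment ℝ p (vert i)) (openSegment ℝ q (vert i)) := by
  refine Set.disjoint_left.2 fun x hxp hxq => ?_
  obtain ⟨c, hc0, -, hxc⟩ := exists_of_mem_openSegment_vert hxp
  obtain ⟨d, hd0, -, hxd⟩ := exists_of_mem_openSegment_vert hxq
  refine not_sIndep_of_forall_ne_eq_mul (i := i) hps hqs (div_pos hc0 hd0) (fun a ha => ?_) hpq
  have hx := (hxc a).symm.trans (hxd a)
  simp only [vert_of_ne ha, mul_zero, add_zero] at hx
  field_simp
  linarith

lemma ratio_lt_of_mem_openSegment_vert {p q x : Fin 3 → ℝ} (hp : ∀ a, 0 < p a)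
    {i j : Fin 3} (hij : i ≠ j) (hxp : x ∈ openSegment ℝ p (vert i))
    (hxq : x ∈ openSegment ℝ q (vert j)) :
    (∀ a ≠ i, q a / p a < q i / p i) ∧ ∀ a ≠ j, q j / p j < q a / p a := by
  obtain ⟨c, hc0, hc1, hxc⟩ := exists_of_mem_openSegment_vert hxp
  obtain ⟨d, hd0, hd1, hxd⟩ := exists_of_mem_openSegment_vert hxq
  have hle : ∀ a ≠ i, q a / p a ≤ c / d := fun a ha => by
    rw [div_le_div_iff₀ (hp a) hd0]
    have := (hxc a).symm.trans (hxd a)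
    simp only [vert_of_ne ha, mul_zero, add_zero] at this
    linarith [mul_nonneg (sub_nonneg.2 hd1.le) (vert_nonneg j a)]
  have hge : ∀ a ≠ j, c / d ≤ q a / p a := fun a ha => by
    rw [div_le_div_iff₀ hd0 (hp a)]
    have := (hxc a).symm.trans (hxd a)
    simp only [vert_of_ne ha, mul_zero, add_zero] at this
    linarith [mul_nonneg (sub_nonneg.2 hc1.le) (vert_nonneg i a)]
  have hlt_i : c / d < q i / p i := by
    rw [div_lt_div_iff₀ hd0 (hp i)]
    have := (hxc i).symm.trans (hxd i)
    simp only [vert_self, vert_of_ne hij, mul_one, mul_zero, add_zero] at this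
    linarith
  have hlt_j : q j / p j < c / d := by
    rw [div_lt_div_iff₀ (hp j) hd0]
    have := (hxc j).symm.trans (hxd j)
    simp only [vert_self, vert_of_ne hij.symm, mul_one, mul_zero, add_zero] at this
    linarith
  exact ⟨fun a ha => (hle a ha).trans_lt hlt_i, fun a ha => hlt_j.trans_le (hge a ha)⟩

lemma eq_of_forall_ne_rel {ι β : Type*} {r : β → β → Prop} [Std.Asymm r] {f : ι → β}
    {i i' : ι} (h : ∀ a ≠ i, r (f a) (f i)) (h' : ∀ a ≠ i', r (f a) (f i')) : i = i' := by
  by_contra hne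
  exact Std.Asymm.asymm _ _ (h i' (Ne.symm hne)) (h' i hne)

lemma eq_of_mem_openSegment_vert_inter {p q x y : Fin 3 → ℝ} {i j h : Fin 3} (hij : i ≠ j)
    (hhi : h ≠ i) (hhj : h ≠ j) (hqh : 0 < q h)
    (hxp : x ∈ openSegment ℝ p (vert i)) (hxq : x ∈ openSegment ℝ q (vert j))
    (hyp : y ∈ openSegment ℝ p (vert i)) (hyq : y ∈ openSegment ℝ q (vert j)) : x = y := by
  set K := p h * q i + q h * (1 - p i)
  have param : ∀ z, z ∈ openSegment ℝ p (vert i) → z ∈ openSegment ℝ q (vert j) →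
      ∃ c : ℝ, (∀ a, z a = c * p a + (1 - c) * vert i a) ∧ c * K = q h := by
    intro z hzp hzq
    obtain ⟨c, -, -, hzc⟩ := exists_of_mem_openSegment_vert hzp
    obtain ⟨d, -, -, hzd⟩ := exists_of_mem_openSegment_vert hzq
    have eh := (hzc h).symm.trans (hzd h)
    have ei := (hzc i).symm.trans (hzd i)
    simp only [vert_self, vert_of_ne hhi, vert_of_ne hhj, vert_of_ne hij, mul_one, mul_zero,
      add_zero] at eh ei
    exact ⟨c, hzc, by linear_combination q i * eh - q h * ei⟩
  obtain ⟨c, hxc, hcK⟩ := param x hxp hxq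
  obtain ⟨c', hyc, hcK'⟩ := param y hyp hyq
  have hK : K ≠ 0 := fun hK => hqh.ne' (by rw [← hcK, hK, mul_zero])
  obtain rfl : c = c' := mul_right_cancel₀ hK (hcK.trans hcK'.symm)
  exact funext fun a => (hxc a).trans (hyc a).symm

theorem SIndep.supportStar_inter_subsingleton {p q : Fin 3 → ℝ} (hp : ∀ a, 0 < p a)
    (hps : ∑ a, p a = 1) (hq : ∀ a, 0 < q a) (hqs : ∑ a, q a = 1) (hpq : SIndep p q) :
    (supportStar p ∩ supportStar q).Subsingleton := by
  rintro x ⟨hxp, hxq⟩ y ⟨hyp, hyq⟩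
  obtain ⟨i, hxi⟩ := Set.mem_iUnion.1 hxp
  obtain ⟨j, hxj⟩ := Set.mem_iUnion.1 hxq
  obtain ⟨i', hyi⟩ := Set.mem_iUnion.1 hyp
  obtain ⟨j', hyj⟩ := Set.mem_iUnion.1 hyq
  have hdisj := hpq.disjoint_openSegment_vert hps hqs
  have hij : i ≠ j := by
    rintro rfl
    exact Set.disjoint_left.1 (hdisj i) hxi hxj
  have hij' : i' ≠ j' := by
    rintro rfl
    exact Set.disjoint_left.1 (hdisj i') hyi hyj
  obtain ⟨hmax, hmin⟩ := ratio_lt_of_mem_openSegment_vert hp hij hxi hxj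
  obtain ⟨hmax', hmin'⟩ := ratio_lt_of_mem_openSegment_vert hp hij' hyi hyj
  obtain rfl : i = i' := eq_of_forall_ne_rel (r := (· < ·)) (f := fun a => q a / p a) hmax hmax'
  obtain rfl : j = j' := eq_of_forall_ne_rel (r := (· > ·)) (f := fun a => q a / p a) hmin hmin'
  obtain ⟨h, hhi, hhj⟩ := (by decide : ∀ i j : Fin 3, ∃ h, h ≠ i ∧ h ≠ j) i j
  exact eq_of_mem_openSegment_vert_inter hij hhi hhj (hq h) hxi hxj hyi hyj

lemma ncard_le_card_of_subset_biUnion {ι α : Type*} {t : Finset ι} {s : ι → Set α} {u : Set α}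
    (hs : ∀ i ∈ t, (s i).Subsingleton) (hu : u ⊆ ⋃ i ∈ t, s i) : u.ncard ≤ #t :=
  calc u.ncard ≤ (⋃ i ∈ t, s i).ncard :=
        Set.ncard_le_ncard hu (t.finite_toSet.biUnion fun i hi => (hs i hi).finite)
    _ ≤ ∑ i ∈ t, (s i).ncard := t.set_ncard_biUnion_le s
    _ ≤ ∑ _i ∈ t, 1 := sum_le_sum fun i hi => (Set.ncard_le_one (hs i hi).finite).2 (hs i hi)
    _ = #t := by rw [sum_const, smul_eq_mul, mul_one]

lemma ncard_range_le {α : Type*} {m : ℕ} (P : Fin m → α) : (Set.range P).ncard ≤ m := by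
  simpa using ncard_le_card_of_subset_biUnion (t := univ) (s := fun j => {P j})
    (fun j _ => Set.subsingleton_singleton) (by simp)

lemma ncard_interPts_le {m : ℕ} {P : Fin m → Fin 3 → ℝ}
    (h : ∀ j k, j ≠ k → (supportStar (P j) ∩ supportStar (P k)).Subsingleton) :
    (interPts P).ncard ≤ m.choose 2 := by
  refine (ncard_le_card_of_subset_biUnion (t := powersetCard 2 univ)
    (s := fun s => ⋂ j ∈ s, supportStar (P j)) ?_ ?_).trans_eq (by simp [card_powersetCard])
  · intro s hs
    obtain ⟨j, k, hjk, rfl⟩ := card_eq_two.1 (mem_powersetCard.1 hs).2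
    exact (h j k hjk).anti (by simp)
  · rintro x ⟨j, k, hjk, hx⟩
    refine Set.mem_biUnion (x := {j, k}) (by simp [mem_powersetCard, card_pair hjk]) ?_
    simp only [Set.mem_iInter, mem_insert, mem_singleton]
    rintro l (rfl | rfl)
    exacts [hx.1, hx.2]

theorem number_of_pareto_faces_bound_general (m : ℕ) (P : Fin m → Fin 3 → ℝ)
    (hP : ∀ j, (∀ i, 0 < P j i) ∧ ∑ i, P j i = 1)
    (hind : ∀ j k, j ≠ k → SIndep (P j) (P k)) :
    (Set.range P ∪ interPts P).ncard ≤ m * (m + 1) / 2 := by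
  have hinter : (interPts P).ncard ≤ m.choose 2 := ncard_interPts_le fun j k hjk =>
    (hind j k hjk).supportStar_inter_subsingleton (hP j).1 (hP j).2 (hP k).1 (hP k).2
  calc (Set.range P ∪ interPts P).ncard
      ≤ (Set.range P).ncard + (interPts P).ncard := Set.ncard_union_le _ _
    _ ≤ m + m.choose 2 := add_le_add (ncard_range_le P) hinter
    _ = m * (m + 1) / 2 := by
      rw [Nat.choose_two_right, add_comm, ← Nat.triangle_succ, Nat.add_sub_cancel, mul_comm]

theorem number_of_pareto_faces_bound (m : ℕ) (P : Fin m → Fin 3 → ℝ)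
    (hP : ∀ j, (∀ i, 0 < P j i) ∧ ∑ i, P j i = 1)
    (hind : ∀ j k, j ≠ k → SIndep (P j) (P k))
    (hnocoinc : ∀ x ∈ interPts P, ∀ j, x ≠ P j) :
    (Set.range P ∪ interPts P).ncard ≤ m * (m + 1) / 2 :=
  number_of_pareto_faces_bound_general m P hP hind
end
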